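/- arXiv:2508.19054 — 2 statements merged into one kernel-verified Lean document; each statement's English description precedes it below -/
import Mathlib

section
/- (Theorem 1, global exponential stability of the closed loop.) Under Condition 1 and Assumption SA1, let α ∈ (0,1) satisfy αP̄ ⪯ Q_i for all i ∈ 𝕄 and α₀ > 0 satisfy α₀(P̄ − P̲) ⪯ Q_i for all i ∈ 𝕄. Let d be an integer with d > max{1, log(α₀α)/log(1−α) + 1} (equivalently d > 1 and (1−α)^{d−1} < α·α₀), so that λ_d := 1 − α + (1−α)^{d−1}/α₀ ∈ (0,1). Let q, L > 0 be such that q·|x|² ≤ xᵀQ_ix for all i ∈ 𝕄 and x ∈ ℝⁿ, and xᵀP̄x ≤ L·|x|² for all x ∈ ℝⁿ, and set β := L/q. Then every closed-loop solution (x_k)_{k∈ℕ} with x_0 = x ∈ ℝⁿ and x_{k+1} ∈ F_d(x_k) for all k satisfies |x_k|² ≤ β·λ_d^k·|x|² for all k ∈ ℕ (here |·| is the Euclidean norm). -/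
open Matrix Filter
open scoped ENNReal

/-- Data of a switched linear-quadratic problem with `M` modes,
state dimension `n` and continuous-input dimension `m`. -/
structure SwitchedLQR (n m M : ℕ) where
  A : Fin M → Matrix (Fin n) (Fin n) ℝ
  B : Fin M → Matrix (Fin n) (Fin m) ℝ
  Q : Fin M → Matrix (Fin n) (Fin n) ℝ
  R : Fin M → Matrix (Fin m) (Fin m) ℝ

namespace SwitchedLQR

variable {n m M : ℕ}

/-- Stage cost `ℓ(x,u,i) = xᵀQᵢx + uᵀRᵢu`. -/
def ell (S : SwitchedLQR n m M) (x : Fin n → ℝ) (u : Fin m → ℝ) (i : Fin M) : ℝ :=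
  x ⬝ᵥ ((S.Q i) *ᵥ x) + u ⬝ᵥ ((S.R i) *ᵥ u)

/-- Riccati operator `𝓡ᵢ(P)`. -/
noncomputable def Ric (S : SwitchedLQR n m M) (i : Fin M)
    (P : Matrix (Fin n) (Fin n) ℝ) : Matrix (Fin n) (Fin n) ℝ :=
  S.Q i + (S.A i)ᵀ * P * S.A i -
    (S.A i)ᵀ * P * S.B i * (S.R i + (S.B i)ᵀ * P * S.B i)⁻¹ * ((S.B i)ᵀ * P * S.A i)

/-- `P_𝐢 = 𝓡_{i₀}(𝓡_{i₁}(⋯𝓡_{i_{d-1}}(P̲)⋯))` for a finite mode sequence `𝐢`. -/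
noncomputable def Pseq (S : SwitchedLQR n m M) (Pund : Matrix (Fin n) (Fin n) ℝ)
    (l : List (Fin M)) : Matrix (Fin n) (Fin n) ℝ :=
  l.foldr S.Ric Pund

/-- Solution `φ(k,x,u,i)` of the switched linear system. -/
def phi (S : SwitchedLQR n m M) (x : Fin n → ℝ) (u : ℕ → Fin m → ℝ) (is : ℕ → Fin M) :
    ℕ → Fin n → ℝ
  | 0 => x
  | k + 1 => S.A (is k) *ᵥ (phi S x u is k) + S.B (is k) *ᵥ (u k)

/-- Finite-horizon cost `J_d` with terminal cost matrix `P̲`. -/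
noncomputable def Jd (S : SwitchedLQR n m M) (Pund : Matrix (Fin n) (Fin n) ℝ) (d : ℕ)
    (x : Fin n → ℝ) (u : ℕ → Fin m → ℝ) (is : ℕ → Fin M) : ℝ :=
  (∑ k ∈ Finset.range d, S.ell (S.phi x u is k) (u k) (is k)) +
    (S.phi x u is d) ⬝ᵥ (Pund *ᵥ (S.phi x u is d))

/-- Infinite-horizon cost `J(x,u,i) ∈ [0,∞]`. -/
noncomputable def Jinf (S : SwitchedLQR n m M) (x : Fin n → ℝ) (u : ℕ → Fin m → ℝ)
    (is : ℕ → Fin M) : ℝ≥0∞ :=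
  ∑' k : ℕ, ENNReal.ofReal (S.ell (S.phi x u is k) (u k) (is k))

/-- Optimal value function `V*(x)`. -/
noncomputable def Vstar (S : SwitchedLQR n m M) (x : Fin n → ℝ) : ℝ≥0∞ :=
  ⨅ (u : ℕ → Fin m → ℝ) (is : ℕ → Fin M), S.Jinf x u is

/-- `V*_d(x)`: minimum over length-`d` mode sequences `𝐢` of `xᵀP_𝐢x`. -/
noncomputable def Vd (S : SwitchedLQR n m M) (Pund : Matrix (Fin n) (Fin n) ℝ) (d : ℕ)
    (x : Fin n → ℝ) : ℝ :=
  sInf {r : ℝ | ∃ l : List (Fin M), l.length = d ∧ r = x ⬝ᵥ ((S.Pseq Pund l) *ᵥ x)}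

/-- Condition 1: the LMI block matrix is positive semi-definite for every mode. -/
def Cond1 (S : SwitchedLQR n m M) (Pund : Matrix (Fin n) (Fin n) ℝ) : Prop :=
  ∀ i : Fin M,
    (Matrix.fromBlocks
      ((S.A i)ᵀ * Pund * S.A i - Pund + S.Q i) ((S.A i)ᵀ * Pund * S.B i)
      ((S.B i)ᵀ * Pund * S.A i) (S.R i + (S.B i)ᵀ * Pund * S.B i)).PosSemidef

/-- Assumption SA1. -/
def SA1 (S : SwitchedLQR n m M) (Pbar : Matrix (Fin n) (Fin n) ℝ) : Prop :=
  Pbar.PosDef ∧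
    ∀ x : Fin n → ℝ, ∃ (u : ℕ → Fin m → ℝ) (is : ℕ → Fin M),
      S.Jinf x u is = S.Vstar x ∧ S.Vstar x ≤ ENNReal.ofReal (x ⬝ᵥ (Pbar *ᵥ x))

/-- `H*_d(x)`. -/
noncomputable def HStar (S : SwitchedLQR n m M) (Pund : Matrix (Fin n) (Fin n) ℝ) (d : ℕ)
    (x : Fin n → ℝ) : Set ((Fin m → ℝ) × Fin M) :=
  {p | S.Vd Pund d x =
        S.ell x p.1 p.2 + S.Vd Pund (d - 1) (S.A p.2 *ᵥ x + S.B p.2 *ᵥ p.1)}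

/-- `F_d(x)`. -/
noncomputable def Fd (S : SwitchedLQR n m M) (Pund : Matrix (Fin n) (Fin n) ℝ) (d : ℕ)
    (x : Fin n → ℝ) : Set (Fin n → ℝ) :=
  {y | ∃ p ∈ S.HStar Pund d x, y = S.A p.2 *ᵥ x + S.B p.2 *ᵥ p.1}

end SwitchedLQR

/-!
The Riccati operator `𝓡ᵢ(P)` is a Schur complement of the matrix of the one-step cost
`(x, u) ↦ ℓ(x, u, i) + (Aᵢx + Bᵢu)ᵀP(Aᵢx + Bᵢu)`, so completing the square shows that
`xᵀ𝓡ᵢ(P)x` is the minimum of this cost over `u`; hence `V*_d` satisfies the dynamic programming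
equation and `H*_d(x)` is never empty. Condition 1 makes the finite-horizon costs nondecreasing in
the horizon, and comparing with an optimal infinite input from SA1 gives `V*_d(x) ≤ xᵀP̄x`.
Since `ℓ ≥ α xᵀP̄x ≥ α V*_d`, along an optimal step `V*_{d-1}` of the successor is at most
`(1 - α) V*_d`; with `α₀ (P̄ - P̲) ⪯ Qᵢ` and induction on the horizon this yields
`V*_{j+2} ≤ (1 + (1 - α)^j / α₀) V*_{j+1}`. Combining the two, `V*_d` contracts by `λ_d` along
the closed loop, and `q|x|² ≤ V*_d(x) ≤ L|x|²`.
-/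

open Topology

section LQBlock

variable {ι κ : Type*} [Fintype ι]

/-- With `X = Qᵢ` its Schur complement is `𝓡ᵢ(P)`; with `X = Qᵢ - P̲` and `P = P̲` it is the
matrix of Condition 1. -/
def lqBlock (A : Matrix ι ι ℝ) (B : Matrix ι κ ℝ) (X P : Matrix ι ι ℝ) (R : Matrix κ κ ℝ) :
    Matrix (ι ⊕ κ) (ι ⊕ κ) ℝ :=
  fromBlocks (X + Aᵀ * P * A) (Aᵀ * P * B) (Bᵀ * P * A) (R + Bᵀ * P * B)

theorem sumElim_dotProduct_lqBlock_mulVec [Fintype κ] (A : Matrix ι ι ℝ) (B : Matrix ι κ ℝ)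
    (X P : Matrix ι ι ℝ) (R : Matrix κ κ ℝ) (x : ι → ℝ) (u : κ → ℝ) :
    Sum.elim x u ⬝ᵥ (lqBlock A B X P R *ᵥ Sum.elim x u) =
      x ⬝ᵥ (X *ᵥ x) + u ⬝ᵥ (R *ᵥ u) + (A *ᵥ x + B *ᵥ u) ⬝ᵥ (P *ᵥ (A *ᵥ x + B *ᵥ u)) := by
  simp only [lqBlock, fromBlocks_mulVec, sumElim_dotProduct_sumElim, add_mulVec, mulVec_add,
    dotProduct_add, add_dotProduct, Sum.elim_comp_inl, Sum.elim_comp_inr, ← mulVec_mulVec,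
    dotProduct_transpose_mulVec]
  simp only [dotProduct_comm (P *ᵥ _)]
  ring

theorem transpose_mul_mul_conjTranspose {α β : Type*} {P : Matrix ι ι ℝ} (hP : P.IsHermitian)
    (A : Matrix ι α ℝ) (B : Matrix ι β ℝ) : (Aᵀ * P * B)ᴴ = Bᵀ * P * A := by
  have hPt : Pᵀ = P := by simpa using hP.eq
  simp [hPt, Matrix.mul_assoc]

theorem lqBlock_posSemidef [Fintype κ] (A : Matrix ι ι ℝ) (B : Matrix ι κ ℝ) {X P : Matrix ι ι ℝ}
    {R : Matrix κ κ ℝ} (hX : X.PosSemidef) (hP : P.PosSemidef) (hR : R.PosSemidef) :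
    (lqBlock A B X P R).PosSemidef := by
  have hK : (lqBlock A B X P R).IsHermitian :=
    .fromBlocks (hX.1.add (isHermitian_conjTranspose_mul_mul A hP.1))
      (transpose_mul_mul_conjTranspose hP.1 A B)
      (hR.1.add (isHermitian_conjTranspose_mul_mul B hP.1))
  refine .of_dotProduct_mulVec_nonneg hK fun v => ?_
  rw [star_trivial, ← Sum.elim_comp_inl_inr v, sumElim_dotProduct_lqBlock_mulVec]
  have := hX.dotProduct_mulVec_nonneg (v ∘ Sum.inl)
  have := hR.dotProduct_mulVec_nonneg (v ∘ Sum.inr)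
  have := hP.dotProduct_mulVec_nonneg (A *ᵥ (v ∘ Sum.inl) + B *ᵥ (v ∘ Sum.inr))
  simp only [star_trivial] at *
  positivity

theorem dotProduct_mulVec_le_of_posSemidef_sub {A B : Matrix ι ι ℝ} (h : (A - B).PosSemidef)
    (x : ι → ℝ) : x ⬝ᵥ (B *ᵥ x) ≤ x ⬝ᵥ (A *ᵥ x) := by
  have := h.dotProduct_mulVec_nonneg x
  rw [star_trivial, sub_mulVec, dotProduct_sub] at this
  linarith

end LQBlock

namespace SwitchedLQR

variable {n m M : ℕ} (S : SwitchedLQR n m M)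

section Riccati

variable {P : Matrix (Fin n) (Fin n) ℝ} {i : Fin M}

theorem ell_nonneg (hQ : (S.Q i).PosSemidef) (hR : (S.R i).PosSemidef) (x : Fin n → ℝ)
    (u : Fin m → ℝ) : 0 ≤ S.ell x u i := by
  have := hQ.dotProduct_mulVec_nonneg x
  have := hR.dotProduct_mulVec_nonneg u
  simp only [star_trivial] at *
  exact add_nonneg ‹_› ‹_›

theorem ell_add_dotProduct_eq_lqBlock (P : Matrix (Fin n) (Fin n) ℝ) (i : Fin M)
    (x : Fin n → ℝ) (u : Fin m → ℝ) :
    S.ell x u i + (S.A i *ᵥ x + S.B i *ᵥ u) ⬝ᵥ (P *ᵥ (S.A i *ᵥ x + S.B i *ᵥ u)) =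
      Sum.elim x u ⬝ᵥ (lqBlock (S.A i) (S.B i) (S.Q i) P (S.R i) *ᵥ Sum.elim x u) := by
  rw [sumElim_dotProduct_lqBlock_mulVec]
  rfl

theorem posDef_R_add (hP : P.PosSemidef) (hR : (S.R i).PosDef) :
    (S.R i + (S.B i)ᵀ * P * S.B i).PosDef :=
  hR.add_posSemidef (by simpa using hP.conjTranspose_mul_mul_same (S.B i))

theorem ell_add_dotProduct_eq_ric (hP : P.PosSemidef) (hR : (S.R i).PosDef)
    (x : Fin n → ℝ) (u : Fin m → ℝ) :
    S.ell x u i + (S.A i *ᵥ x + S.B i *ᵥ u) ⬝ᵥ (P *ᵥ (S.A i *ᵥ x + S.B i *ᵥ u)) =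
      x ⬝ᵥ (S.Ric i P *ᵥ x) +
        (((S.R i + (S.B i)ᵀ * P * S.B i)⁻¹ * ((S.B i)ᵀ * P * S.A i)) *ᵥ x + u) ⬝ᵥ
          ((S.R i + (S.B i)ᵀ * P * S.B i) *ᵥ
            (((S.R i + (S.B i)ᵀ * P * S.B i)⁻¹ * ((S.B i)ᵀ * P * S.A i)) *ᵥ x + u)) := by
  have hG := S.posDef_R_add hP hR
  have := hG.isUnit.invertible
  have h := schur_complement_eq₂₂ (S.Q i + (S.A i)ᵀ * P * S.A i) ((S.A i)ᵀ * P * S.B i) x u hG.1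
  rw [transpose_mul_mul_conjTranspose hP.1] at h
  simp only [star_trivial, ← dotProduct_mulVec] at h
  rw [ell_add_dotProduct_eq_lqBlock, lqBlock, h, add_comm]
  rfl

theorem dotProduct_ric_le (hP : P.PosSemidef) (hR : (S.R i).PosDef) (x : Fin n → ℝ)
    (u : Fin m → ℝ) :
    x ⬝ᵥ (S.Ric i P *ᵥ x) ≤
      S.ell x u i + (S.A i *ᵥ x + S.B i *ᵥ u) ⬝ᵥ (P *ᵥ (S.A i *ᵥ x + S.B i *ᵥ u)) := by
  rw [S.ell_add_dotProduct_eq_ric hP hR]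
  have := (S.posDef_R_add hP hR).posSemidef.dotProduct_mulVec_nonneg
    (((S.R i + (S.B i)ᵀ * P * S.B i)⁻¹ * ((S.B i)ᵀ * P * S.A i)) *ᵥ x + u)
  rw [star_trivial] at this
  linarith

theorem exists_ell_add_dotProduct_eq_ric (hP : P.PosSemidef) (hR : (S.R i).PosDef)
    (x : Fin n → ℝ) : ∃ u : Fin m → ℝ,
      S.ell x u i + (S.A i *ᵥ x + S.B i *ᵥ u) ⬝ᵥ (P *ᵥ (S.A i *ᵥ x + S.B i *ᵥ u)) =
        x ⬝ᵥ (S.Ric i P *ᵥ x) :=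
  ⟨-(((S.R i + (S.B i)ᵀ * P * S.B i)⁻¹ * ((S.B i)ᵀ * P * S.A i)) *ᵥ x), by
    rw [S.ell_add_dotProduct_eq_ric hP hR]
    simp⟩

theorem ric_posSemidef (hP : P.PosSemidef) (hQ : (S.Q i).PosSemidef) (hR : (S.R i).PosDef) :
    (S.Ric i P).PosSemidef := by
  have hG := S.posDef_R_add hP hR
  have := hG.isUnit.invertible
  have hK := lqBlock_posSemidef (S.A i) (S.B i) hQ hP hR.posSemidef
  have h := (PosDef.fromBlocks₂₂ (S.Q i + (S.A i)ᵀ * P * S.A i) ((S.A i)ᵀ * P * S.B i) hG).1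
    (by rw [transpose_mul_mul_conjTranspose hP.1]; exact hK)
  rwa [transpose_mul_mul_conjTranspose hP.1] at h

theorem pseq_posSemidef {Pund : Matrix (Fin n) (Fin n) ℝ} (hPund : Pund.PosSemidef)
    (hQ : ∀ i, (S.Q i).PosSemidef) (hR : ∀ i, (S.R i).PosDef) (l : List (Fin M)) :
    (S.Pseq Pund l).PosSemidef := by
  induction l with
  | nil => exact hPund
  | cons i l ih => exact S.ric_posSemidef ih (hQ i) (hR i)

end Riccati

section ValueIteration

variable (Pund : Matrix (Fin n) (Fin n) ℝ)

theorem vd_set_finite (d : ℕ) (x : Fin n → ℝ) :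
    {r : ℝ | ∃ l : List (Fin M), l.length = d ∧ r = x ⬝ᵥ ((S.Pseq Pund l) *ᵥ x)}.Finite :=
  ((List.finite_length_eq (Fin M) d).image fun l => x ⬝ᵥ ((S.Pseq Pund l) *ᵥ x)).subset
    (by rintro r ⟨l, hl, rfl⟩; exact ⟨l, hl, rfl⟩)

theorem vd_le {d : ℕ} {l : List (Fin M)} (hl : l.length = d) (x : Fin n → ℝ) :
    S.Vd Pund d x ≤ x ⬝ᵥ ((S.Pseq Pund l) *ᵥ x) :=
  csInf_le (S.vd_set_finite Pund d x).bddBelow ⟨l, hl, rfl⟩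

theorem exists_vd_eq [Nonempty (Fin M)] (d : ℕ) (x : Fin n → ℝ) :
    ∃ l : List (Fin M), l.length = d ∧ S.Vd Pund d x = x ⬝ᵥ ((S.Pseq Pund l) *ᵥ x) :=
  Set.Nonempty.csInf_mem (by exact ⟨_, List.replicate d (Classical.arbitrary _), by simp, rfl⟩)
    (S.vd_set_finite Pund d x)

theorem vd_zero (x : Fin n → ℝ) : S.Vd Pund 0 x = x ⬝ᵥ (Pund *ᵥ x) := by
  have : {r : ℝ | ∃ l : List (Fin M), l.length = 0 ∧ r = x ⬝ᵥ ((S.Pseq Pund l) *ᵥ x)} =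
      {x ⬝ᵥ (Pund *ᵥ x)} := by
    ext; simp [Pseq]
  rw [Vd, this, csInf_singleton]

variable [Nonempty (Fin M)] {Pund}

theorem vd_nonneg (hPund : Pund.PosSemidef) (hQ : ∀ i, (S.Q i).PosSemidef)
    (hR : ∀ i, (S.R i).PosDef) (d : ℕ) (x : Fin n → ℝ) : 0 ≤ S.Vd Pund d x := by
  obtain ⟨l, -, h⟩ := S.exists_vd_eq Pund d x
  simpa [h] using (S.pseq_posSemidef hPund hQ hR l).dotProduct_mulVec_nonneg x

theorem vd_succ_le (hPund : Pund.PosSemidef) (hQ : ∀ i, (S.Q i).PosSemidef)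
    (hR : ∀ i, (S.R i).PosDef) (j : ℕ) (x : Fin n → ℝ) (u : Fin m → ℝ) (i : Fin M) :
    S.Vd Pund (j + 1) x ≤ S.ell x u i + S.Vd Pund j (S.A i *ᵥ x + S.B i *ᵥ u) := by
  obtain ⟨l, hl, h⟩ := S.exists_vd_eq Pund j (S.A i *ᵥ x + S.B i *ᵥ u)
  rw [h]
  exact (S.vd_le Pund (l := i :: l) (by simp [hl]) x).trans
    (S.dotProduct_ric_le (S.pseq_posSemidef hPund hQ hR l) (hR i) x u)

theorem exists_mem_hStar (hPund : Pund.PosSemidef) (hQ : ∀ i, (S.Q i).PosSemidef)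
    (hR : ∀ i, (S.R i).PosDef) (j : ℕ) (x : Fin n → ℝ) : ∃ p, p ∈ S.HStar Pund (j + 1) x := by
  obtain ⟨_ | ⟨i, l⟩, hl, h⟩ := S.exists_vd_eq Pund (j + 1) x
  · simp at hl
  obtain ⟨u, hu⟩ :=
    S.exists_ell_add_dotProduct_eq_ric (S.pseq_posSemidef hPund hQ hR l) (hR i) x
  refine ⟨(u, i), le_antisymm (S.vd_succ_le hPund hQ hR j x u i) ?_⟩
  show S.ell x u i + S.Vd Pund j (S.A i *ᵥ x + S.B i *ᵥ u) ≤ S.Vd Pund (j + 1) x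
  rw [h, Pseq, List.foldr_cons, ← Pseq, ← hu]
  exact add_le_add_right (S.vd_le Pund (by simpa using hl) _) _

end ValueIteration

section Cond1

variable {Pund : Matrix (Fin n) (Fin n) ℝ}

theorem dotProduct_le_ell_add_of_cond1 (hC : S.Cond1 Pund) (x : Fin n → ℝ) (u : Fin m → ℝ)
    (i : Fin M) : x ⬝ᵥ (Pund *ᵥ x) ≤
      S.ell x u i + (S.A i *ᵥ x + S.B i *ᵥ u) ⬝ᵥ (Pund *ᵥ (S.A i *ᵥ x + S.B i *ᵥ u)) := by
  have hK : (lqBlock (S.A i) (S.B i) (S.Q i - Pund) Pund (S.R i)).PosSemidef := by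
    have := hC i
    rwa [show (S.A i)ᵀ * Pund * S.A i - Pund + S.Q i = S.Q i - Pund + (S.A i)ᵀ * Pund * S.A i
      by abel] at this
  have := hK.dotProduct_mulVec_nonneg (Sum.elim x u)
  rw [star_trivial, sumElim_dotProduct_lqBlock_mulVec, sub_mulVec, dotProduct_sub] at this
  unfold ell
  linarith

theorem vd_zero_le_vd_one [Nonempty (Fin M)] (hPund : Pund.PosSemidef)
    (hQ : ∀ i, (S.Q i).PosSemidef) (hR : ∀ i, (S.R i).PosDef) (hC : S.Cond1 Pund)
    (x : Fin n → ℝ) : S.Vd Pund 0 x ≤ S.Vd Pund 1 x := by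
  obtain ⟨⟨u, i⟩, hp⟩ := S.exists_mem_hStar hPund hQ hR 0 x
  change S.Vd Pund 1 x = S.ell x u i + S.Vd Pund 0 (S.A i *ᵥ x + S.B i *ᵥ u) at hp
  rw [hp, S.vd_zero, S.vd_zero]
  exact S.dotProduct_le_ell_add_of_cond1 hC x u i

theorem phi_succ_eq_phi_shift (x : Fin n → ℝ) (u : ℕ → Fin m → ℝ) (is : ℕ → Fin M) (k : ℕ) :
    S.phi x u is (k + 1) =
      S.phi (S.A (is 0) *ᵥ x + S.B (is 0) *ᵥ u 0) (fun t => u (t + 1)) (fun t => is (t + 1)) k := by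
  induction k with
  | zero => rfl
  | succ k ih => rw [phi, ih]; rfl

theorem jd_succ (j : ℕ) (x : Fin n → ℝ) (u : ℕ → Fin m → ℝ) (is : ℕ → Fin M) :
    S.Jd Pund (j + 1) x u is = S.ell x (u 0) (is 0) +
      S.Jd Pund j (S.A (is 0) *ᵥ x + S.B (is 0) *ᵥ u 0) (fun t => u (t + 1))
        (fun t => is (t + 1)) := by
  simp only [Jd, Finset.sum_range_succ', S.phi_succ_eq_phi_shift x u is]
  rw [phi]
  ring

theorem vd_le_jd [Nonempty (Fin M)] (hPund : Pund.PosSemidef) (hQ : ∀ i, (S.Q i).PosSemidef)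
    (hR : ∀ i, (S.R i).PosDef) (j : ℕ) (x : Fin n → ℝ) (u : ℕ → Fin m → ℝ)
    (is : ℕ → Fin M) : S.Vd Pund j x ≤ S.Jd Pund j x u is := by
  induction j generalizing x u is with
  | zero => simp [S.vd_zero, Jd, phi]
  | succ j ih =>
    rw [S.jd_succ]
    exact (S.vd_succ_le hPund hQ hR j x (u 0) (is 0)).trans (add_le_add_right (ih _ _ _) _)

theorem monotone_jd (hC : S.Cond1 Pund) (x : Fin n → ℝ) (u : ℕ → Fin m → ℝ)
    (is : ℕ → Fin M) : Monotone fun N => S.Jd Pund N x u is := by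
  refine monotone_nat_of_le_succ fun N => ?_
  simp only [Jd, Finset.sum_range_succ, phi]
  linarith [S.dotProduct_le_ell_add_of_cond1 hC (S.phi x u is N) (u N) (is N)]

end Cond1

section InfiniteHorizon

variable {x : Fin n → ℝ} {u : ℕ → Fin m → ℝ} {is : ℕ → Fin M}

theorem summable_ell_of_jinf_le (hQ : ∀ i, (S.Q i).PosSemidef) (hR : ∀ i, (S.R i).PosSemidef)
    {c : ℝ} (hc : 0 ≤ c) (h : S.Jinf x u is ≤ ENNReal.ofReal c) :
    Summable (fun k => S.ell (S.phi x u is k) (u k) (is k)) ∧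
      ∑' k, S.ell (S.phi x u is k) (u k) (is k) ≤ c := by
  have hf0 : ∀ k, 0 ≤ S.ell (S.phi x u is k) (u k) (is k) := fun k =>
    S.ell_nonneg (hQ _) (hR _) _ _
  have hf : Summable (fun k => S.ell (S.phi x u is k) (u k) (is k)) := by
    simpa [ENNReal.toReal_ofReal (hf0 _)] using
      ENNReal.summable_toReal (ne_top_of_le_ne_top ENNReal.ofReal_ne_top h)
  rw [Jinf, ← ENNReal.ofReal_tsum_of_nonneg hf0 hf, ENNReal.ofReal_le_ofReal_iff hc] at h
  exact ⟨hf, h⟩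

theorem tendsto_phi_of_summable (hR : ∀ i, (S.R i).PosSemidef) {q : ℝ} (hq : 0 < q)
    (hqQ : ∀ (i : Fin M) (y : Fin n → ℝ), q * ∑ j, (y j) ^ 2 ≤ y ⬝ᵥ ((S.Q i) *ᵥ y))
    (hf : Summable (fun k => S.ell (S.phi x u is k) (u k) (is k))) :
    Tendsto (S.phi x u is) atTop (𝓝 0) := by
  refine tendsto_pi_nhds.2 fun j => squeeze_zero_norm (fun k => Real.abs_le_sqrt ?_)
    (by simpa using (hf.tendsto_atTop_zero.div_const q).sqrt)
  rw [le_div_iff₀ hq]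
  have hj := Finset.single_le_sum (fun j _ => sq_nonneg (S.phi x u is k j)) (Finset.mem_univ j)
  have hu := (hR (is k)).dotProduct_mulVec_nonneg (u k)
  rw [star_trivial] at hu
  unfold ell
  nlinarith [hqQ (is k) (S.phi x u is k)]

theorem vd_le_tsum [Nonempty (Fin M)] {Pund : Matrix (Fin n) (Fin n) ℝ}
    (hPund : Pund.PosSemidef) (hQ : ∀ i, (S.Q i).PosSemidef) (hR : ∀ i, (S.R i).PosDef)
    (hC : S.Cond1 Pund) (hf : Summable (fun k => S.ell (S.phi x u is k) (u k) (is k)))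
    (hφ : Tendsto (S.phi x u is) atTop (𝓝 0)) (j : ℕ) :
    S.Vd Pund j x ≤ ∑' k, S.ell (S.phi x u is k) (u k) (is k) := by
  have hquad : Continuous fun y : Fin n → ℝ => y ⬝ᵥ (Pund *ᵥ y) :=
    continuous_id.dotProduct (continuous_const.matrix_mulVec continuous_id)
  have hterm : Tendsto (fun N => S.phi x u is N ⬝ᵥ (Pund *ᵥ S.phi x u is N)) atTop (𝓝 0) := by
    simpa [Function.comp_def] using (hquad.tendsto 0).comp hφ
  refine ge_of_tendsto (by simpa using tendsto_const_nhds.add hterm)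
    (eventually_atTop.2 ⟨j, fun N hN => ?_⟩)
  refine (S.vd_le_jd hPund hQ hR j x u is).trans ((S.monotone_jd hC x u is hN).trans ?_)
  exact add_le_add_left (hf.sum_le_tsum _ fun k _ => S.ell_nonneg (hQ _) (hR _).posSemidef _ _) _

theorem vd_le_of_sa1 [Nonempty (Fin M)] {Pund Pbar : Matrix (Fin n) (Fin n) ℝ}
    (hPund : Pund.PosSemidef) (hQ : ∀ i, (S.Q i).PosSemidef) (hR : ∀ i, (S.R i).PosDef)
    (hC : S.Cond1 Pund) (hSA : S.SA1 Pbar) {q : ℝ} (hq : 0 < q)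
    (hqQ : ∀ (i : Fin M) (y : Fin n → ℝ), q * ∑ j, (y j) ^ 2 ≤ y ⬝ᵥ ((S.Q i) *ᵥ y))
    (j : ℕ) (x : Fin n → ℝ) : S.Vd Pund j x ≤ x ⬝ᵥ (Pbar *ᵥ x) := by
  obtain ⟨u, is, hJ, hV⟩ := hSA.2 x
  have hR' i := (hR i).posSemidef
  obtain ⟨hf, hle⟩ := S.summable_ell_of_jinf_le hQ hR'
    (by simpa using hSA.1.posSemidef.dotProduct_mulVec_nonneg x) (hJ ▸ hV)
  exact (S.vd_le_tsum hPund hQ hR hC hf (S.tendsto_phi_of_summable hR' hq hqQ hf) j).trans hle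

end InfiniteHorizon

section RelaxedDynamicProgramming

variable {Pund Pbar : Matrix (Fin n) (Fin n) ℝ} {α α₀ : ℝ}

/-- Along an optimal step the stage cost is at least `α V*_d(y)`, so the tail value drops
by the factor `1 - α`. -/
theorem vd_pred_le_of_mem_hStar (hR : ∀ i, (S.R i).PosSemidef) (hα : 0 ≤ α)
    (hαQ : ∀ i, (S.Q i - α • Pbar).PosSemidef) {d : ℕ} {y : Fin n → ℝ}
    {p : (Fin m → ℝ) × Fin M} (hVP : S.Vd Pund d y ≤ y ⬝ᵥ (Pbar *ᵥ y))
    (hp : p ∈ S.HStar Pund d y) :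
    S.Vd Pund (d - 1) (S.A p.2 *ᵥ y + S.B p.2 *ᵥ p.1) ≤ (1 - α) * S.Vd Pund d y := by
  obtain ⟨u, i⟩ := p
  have hQ := dotProduct_mulVec_le_of_posSemidef_sub (hαQ i) y
  rw [smul_mulVec, dotProduct_smul, smul_eq_mul] at hQ
  have hu := (hR i).dotProduct_mulVec_nonneg u
  rw [star_trivial] at hu
  have hαV := mul_le_mul_of_nonneg_left hVP hα
  change S.Vd Pund d y = S.ell y u i + _ at hp
  unfold ell at hp
  linarith

variable [Nonempty (Fin M)]

theorem exists_dotProduct_Q_le_vd_succ (hPund : Pund.PosSemidef)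
    (hQ : ∀ i, (S.Q i).PosSemidef) (hR : ∀ i, (S.R i).PosDef) (j : ℕ) (y : Fin n → ℝ) :
    ∃ i, y ⬝ᵥ (S.Q i *ᵥ y) ≤ S.Vd Pund (j + 1) y := by
  obtain ⟨⟨u, i⟩, hp⟩ := S.exists_mem_hStar hPund hQ hR j y
  change S.Vd Pund (j + 1) y = S.ell y u i + S.Vd Pund j (S.A i *ᵥ y + S.B i *ᵥ u) at hp
  have hV := S.vd_nonneg hPund hQ hR j (S.A i *ᵥ y + S.B i *ᵥ u)
  have hu := (hR i).posSemidef.dotProduct_mulVec_nonneg u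
  rw [star_trivial] at hu
  unfold ell at hp
  exact ⟨i, by linarith⟩

theorem vd_add_two_le (hPund : Pund.PosSemidef) (hQ : ∀ i, (S.Q i).PosSemidef)
    (hR : ∀ i, (S.R i).PosDef) (hC : S.Cond1 Pund)
    (hVP : ∀ j y, S.Vd Pund j y ≤ y ⬝ᵥ (Pbar *ᵥ y)) (hα : 0 ≤ α) (hα1 : α ≤ 1)
    (hαQ : ∀ i, (S.Q i - α • Pbar).PosSemidef) (hα₀ : 0 < α₀)
    (hα₀Q : ∀ i, (S.Q i - α₀ • (Pbar - Pund)).PosSemidef) (j : ℕ) (y : Fin n → ℝ) :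
    S.Vd Pund (j + 2) y ≤ (1 + (1 - α) ^ j / α₀) * S.Vd Pund (j + 1) y := by
  induction j generalizing y with
  | zero =>
    obtain ⟨i, hi⟩ := S.exists_dotProduct_Q_le_vd_succ hPund hQ hR 0 y
    have hgap := dotProduct_mulVec_le_of_posSemidef_sub (hα₀Q i) y
    rw [smul_mulVec, dotProduct_smul, smul_eq_mul, sub_mulVec, dotProduct_sub] at hgap
    have hgap' : y ⬝ᵥ (Pbar *ᵥ y) - y ⬝ᵥ (Pund *ᵥ y) ≤ S.Vd Pund 1 y / α₀ := by
      rw [le_div_iff₀ hα₀]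
      linarith
    have h01 := S.vd_zero_le_vd_one hPund hQ hR hC y
    rw [S.vd_zero] at h01
    have hVP2 := hVP 2 y
    simp only [zero_add, pow_zero]
    linarith [show (1 + 1 / α₀) * S.Vd Pund 1 y = S.Vd Pund 1 y + S.Vd Pund 1 y / α₀ by ring]
  | succ j ih =>
    obtain ⟨⟨u, i⟩, hp⟩ := S.exists_mem_hStar hPund hQ hR (j + 1) y
    have hnext := S.vd_pred_le_of_mem_hStar (fun i => (hR i).posSemidef) hα hαQ (hVP _ y) hp
    change S.Vd Pund (j + 2) y = S.ell y u i + S.Vd Pund (j + 1) (S.A i *ᵥ y + S.B i *ᵥ u)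
      at hp
    have hc : 0 ≤ (1 - α) ^ j / α₀ := div_nonneg (pow_nonneg (sub_nonneg.2 hα1) _) hα₀.le
    calc S.Vd Pund (j + 3) y
        ≤ S.ell y u i + S.Vd Pund (j + 2) (S.A i *ᵥ y + S.B i *ᵥ u) :=
          S.vd_succ_le hPund hQ hR (j + 2) y u i
      _ ≤ S.ell y u i + (1 + (1 - α) ^ j / α₀) * S.Vd Pund (j + 1) (S.A i *ᵥ y + S.B i *ᵥ u) :=
          add_le_add_right (ih _) _
      _ = S.Vd Pund (j + 2) y +
            (1 - α) ^ j / α₀ * S.Vd Pund (j + 1) (S.A i *ᵥ y + S.B i *ᵥ u) := by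
          rw [hp]; ring
      _ ≤ S.Vd Pund (j + 2) y + (1 - α) ^ j / α₀ * ((1 - α) * S.Vd Pund (j + 2) y) :=
          add_le_add_right (mul_le_mul_of_nonneg_left hnext hc) _
      _ = (1 + (1 - α) ^ (j + 1) / α₀) * S.Vd Pund (j + 2) y := by ring

theorem vd_le_of_mem_fd (hPund : Pund.PosSemidef) (hQ : ∀ i, (S.Q i).PosSemidef)
    (hR : ∀ i, (S.R i).PosDef) (hC : S.Cond1 Pund)
    (hVP : ∀ j y, S.Vd Pund j y ≤ y ⬝ᵥ (Pbar *ᵥ y)) (hα : 0 ≤ α) (hα1 : α ≤ 1)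
    (hαQ : ∀ i, (S.Q i - α • Pbar).PosSemidef) (hα₀ : 0 < α₀)
    (hα₀Q : ∀ i, (S.Q i - α₀ • (Pbar - Pund)).PosSemidef) {e : ℕ} {y y' : Fin n → ℝ}
    (hy : y' ∈ S.Fd Pund (e + 2) y) :
    S.Vd Pund (e + 2) y' ≤ (1 - α + (1 - α) ^ (e + 1) / α₀) * S.Vd Pund (e + 2) y := by
  obtain ⟨p, hp, rfl⟩ := hy
  have hc : 0 ≤ 1 + (1 - α) ^ e / α₀ := by
    have := div_nonneg (pow_nonneg (sub_nonneg.2 hα1) e) hα₀.le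
    linarith
  calc S.Vd Pund (e + 2) (S.A p.2 *ᵥ y + S.B p.2 *ᵥ p.1)
      ≤ (1 + (1 - α) ^ e / α₀) * S.Vd Pund (e + 1) (S.A p.2 *ᵥ y + S.B p.2 *ᵥ p.1) :=
        S.vd_add_two_le hPund hQ hR hC hVP hα hα1 hαQ hα₀ hα₀Q e _
    _ ≤ (1 + (1 - α) ^ e / α₀) * ((1 - α) * S.Vd Pund (e + 2) y) :=
        mul_le_mul_of_nonneg_left
          (S.vd_pred_le_of_mem_hStar (fun i => (hR i).posSemidef) hα hαQ (hVP _ y) hp) hc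
    _ = (1 - α + (1 - α) ^ (e + 1) / α₀) * S.Vd Pund (e + 2) y := by ring

end RelaxedDynamicProgramming

end SwitchedLQR

theorem stmt15_general {n m M : ℕ}
    (S : SwitchedLQR n m M)
    (hQ : ∀ i : Fin M, (S.Q i).PosDef) (hR : ∀ i : Fin M, (S.R i).PosDef)
    (Pund : Matrix (Fin n) (Fin n) ℝ) (hPund : Pund.PosSemidef)
    (hC : S.Cond1 Pund)
    (Pbar : Matrix (Fin n) (Fin n) ℝ) (hSA : S.SA1 Pbar)
    (α : ℝ) (hα0 : 0 < α) (hα1 : α < 1)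
    (hαQ : ∀ i : Fin M, (S.Q i - α • Pbar).PosSemidef)
    (α₀ : ℝ) (hα₀ : 0 < α₀)
    (hα₀Q : ∀ i : Fin M, (S.Q i - α₀ • (Pbar - Pund)).PosSemidef)
    (d : ℕ) (hd : 1 < d) (hdα : (1 - α) ^ (d - 1) < α * α₀)
    (lam : ℝ) (hlam : lam = 1 - α + (1 - α) ^ (d - 1) / α₀)
    (q L : ℝ) (hq : 0 < q)
    (hqQ : ∀ (i : Fin M) (y : Fin n → ℝ), q * ∑ j, (y j) ^ 2 ≤ y ⬝ᵥ ((S.Q i) *ᵥ y))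
    (hLP : ∀ y : Fin n → ℝ, y ⬝ᵥ (Pbar *ᵥ y) ≤ L * ∑ j, (y j) ^ 2)
    (β : ℝ) (hβ : β = L / q)
    (x : Fin n → ℝ) (xs : ℕ → Fin n → ℝ) (hx0 : xs 0 = x)
    (hstep : ∀ k : ℕ, xs (k + 1) ∈ S.Fd Pund d (xs k)) :
    (0 < lam ∧ lam < 1) ∧
    ∀ k : ℕ, (∑ j, (xs k j) ^ 2) ≤ β * lam ^ k * ∑ j, (x j) ^ 2 := by
  have : Nonempty (Fin M) := by
    obtain ⟨p, -⟩ := hstep 0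
    exact ⟨p.2⟩
  obtain ⟨e, rfl⟩ : ∃ e, d = e + 2 := ⟨d - 2, by omega⟩
  replace hlam : lam = 1 - α + (1 - α) ^ (e + 1) / α₀ := hlam
  replace hdα : (1 - α) ^ (e + 1) / α₀ < α := (div_lt_iff₀ hα₀).2 hdα
  have hlam_pos : 0 < lam := by
    have := div_pos (pow_pos (sub_pos.2 hα1) (e + 1)) hα₀
    linarith
  refine ⟨⟨hlam_pos, by linarith⟩, fun k => ?_⟩
  have hQ' i := (hQ i).posSemidef
  have hVP := S.vd_le_of_sa1 hPund hQ' hR hC hSA hq hqQ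
  have hdecay : S.Vd Pund (e + 2) (xs k) ≤ lam ^ k * S.Vd Pund (e + 2) x := by
    rw [← hx0]
    refine le_geom (u := fun k => S.Vd Pund (e + 2) (xs k)) hlam_pos.le k fun j _ => ?_
    rw [hlam]
    exact S.vd_le_of_mem_fd hPund hQ' hR hC hVP hα0.le hα1.le hαQ hα₀ hα₀Q (hstep j)
  obtain ⟨i, hi⟩ := S.exists_dotProduct_Q_le_vd_succ hPund hQ' hR (e + 1) (xs k)
  rw [hβ, div_mul_eq_mul_div, div_mul_eq_mul_div, le_div_iff₀ hq]
  calc (∑ j, xs k j ^ 2) * q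
      ≤ S.Vd Pund (e + 2) (xs k) := by linarith [hqQ i (xs k)]
    _ ≤ lam ^ k * S.Vd Pund (e + 2) x := hdecay
    _ ≤ lam ^ k * (L * ∑ j, x j ^ 2) :=
        mul_le_mul_of_nonneg_left ((hVP _ x).trans (hLP x)) (pow_nonneg hlam_pos.le k)
    _ = L * lam ^ k * ∑ j, x j ^ 2 := by ring

/-- Theorem 1, global exponential stability of the closed loop:
under Condition 1 and SA1, with `α,α₀` as in eq. (8), if `d > 1` and
`(1-α)^{d-1} < α·α₀` (equivalently `d > max{1, log(α₀α)/log(1-α) + 1}`), then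
`λ_d := 1 - α + (1-α)^{d-1}/α₀ ∈ (0,1)` and, with `q·|x|² ≤ xᵀQᵢx`,
`xᵀP̄x ≤ L·|x|²` and `β := L/q`, every closed-loop solution of `F_d` satisfies
`|x_k|² ≤ β·λ_d^k·|x|²`. -/
theorem stmt15 {n m M : ℕ} (hn : 0 < n) (hm : 0 < m) (hM : 0 < M)
    (S : SwitchedLQR n m M)
    (hQ : ∀ i : Fin M, (S.Q i).PosDef) (hR : ∀ i : Fin M, (S.R i).PosDef)
    (Pund : Matrix (Fin n) (Fin n) ℝ) (hPund : Pund.PosSemidef)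
    (hC : S.Cond1 Pund)
    (Pbar : Matrix (Fin n) (Fin n) ℝ) (hSA : S.SA1 Pbar)
    (α : ℝ) (hα0 : 0 < α) (hα1 : α < 1)
    (hαQ : ∀ i : Fin M, (S.Q i - α • Pbar).PosSemidef)
    (α₀ : ℝ) (hα₀ : 0 < α₀)
    (hα₀Q : ∀ i : Fin M, (S.Q i - α₀ • (Pbar - Pund)).PosSemidef)
    (d : ℕ) (hd : 1 < d) (hdα : (1 - α) ^ (d - 1) < α * α₀)
    (lam : ℝ) (hlam : lam = 1 - α + (1 - α) ^ (d - 1) / α₀)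
    (q L : ℝ) (hq : 0 < q) (hL : 0 < L)
    (hqQ : ∀ (i : Fin M) (y : Fin n → ℝ), q * ∑ j, (y j) ^ 2 ≤ y ⬝ᵥ ((S.Q i) *ᵥ y))
    (hLP : ∀ y : Fin n → ℝ, y ⬝ᵥ (Pbar *ᵥ y) ≤ L * ∑ j, (y j) ^ 2)
    (β : ℝ) (hβ : β = L / q)
    (x : Fin n → ℝ) (xs : ℕ → Fin n → ℝ) (hx0 : xs 0 = x)
    (hstep : ∀ k : ℕ, xs (k + 1) ∈ S.Fd Pund d (xs k)) :
    (0 < lam ∧ lam < 1) ∧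
    ∀ k : ℕ, (∑ j, (xs k j) ^ 2) ≤ β * lam ^ k * ∑ j, (x j) ^ 2 :=
  stmt15_general S hQ hR Pund hPund hC Pbar hSA α hα0 hα1 hαQ α₀ hα₀ hα₀Q d hd hdα lam hlam q L hq
    hqQ hLP β hβ x xs hx0 hstep
end

section
/- (Correctness certificate for best-first exploration, core of Proposition 4.) Under Condition 1, let d ∈ ℕ, x ∈ ℝⁿ, and let T be a finite set of finite mode sequences (lists with entries in 𝕄) such that every mode sequence of length d has a prefix (possibly itself) belonging to T. Suppose s ∈ T has length d and xᵀP_sx ≤ xᵀP_tx for every t ∈ T. Then xᵀP_sx = V*_d(x), i.e., s attains the minimum of xᵀP_𝐢x over all length-d mode sequences 𝐢. -/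
open Matrix Filter
open scoped ENNReal

/-!
Completing the square,
`Q + (A + BK)ᵀP(A + BK) + KᵀRK = 𝓡(P) + (K + L)ᵀ(R + BᵀPB)(K + L)` with `L = (R + BᵀPB)⁻¹BᵀPA`,
shows that each Riccati operator is the minimum over feedback gains `K` of maps that are
monotone in `P`, hence is itself monotone in the Loewner order on positive semidefinite
matrices. By a Schur complement, Condition 1 says exactly `P̲ ≤ 𝓡ᵢ(P̲)`, so extending a mode
sequence can only increase `P_𝐢`. Every length-`d` sequence therefore costs at least its prefix
in `T`, which costs at least `s`.
-/

open Matrix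
open scoped MatrixOrder

section RealMatrix

variable {ι κ : Type*}

theorem Matrix.PosSemidef.transpose_eq {P : Matrix ι ι ℝ} (hP : P.PosSemidef) : Pᵀ = P := by
  simpa only [conjTranspose_eq_transpose_of_trivial] using hP.isHermitian.eq

variable [Fintype ι] [Fintype κ]

theorem Matrix.PosSemidef.transpose_mul_mul_same {P : Matrix ι ι ℝ} (hP : P.PosSemidef)
    (X : Matrix ι κ ℝ) : (Xᵀ * P * X).PosSemidef := by
  simpa only [conjTranspose_eq_transpose_of_trivial] using hP.conjTranspose_mul_mul_same X

theorem Matrix.transpose_mul_mul_le_transpose_mul_mul {P₁ P₂ : Matrix ι ι ℝ} (h : P₁ ≤ P₂)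
    (X : Matrix ι κ ℝ) : Xᵀ * P₁ * X ≤ Xᵀ * P₂ * X := by
  rw [le_iff, ← Matrix.sub_mul, ← Matrix.mul_sub]
  exact (le_iff.mp h).transpose_mul_mul_same X

theorem Matrix.dotProduct_mulVec_le_of_le {P₁ P₂ : Matrix ι ι ℝ} (h : P₁ ≤ P₂) (x : ι → ℝ) :
    x ⬝ᵥ (P₁ *ᵥ x) ≤ x ⬝ᵥ (P₂ *ᵥ x) := by
  have := (le_iff.mp h).dotProduct_mulVec_nonneg x
  rwa [star_trivial, sub_mulVec, dotProduct_sub, sub_nonneg] at this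

variable [DecidableEq κ]

theorem closedLoop_eq_riccati_add (A Q P : Matrix ι ι ℝ) (B : Matrix ι κ ℝ) (R : Matrix κ κ ℝ)
    (K : Matrix κ ι ℝ) (hP : Pᵀ = P) (hR : Rᵀ = R) (hW : IsUnit (R + Bᵀ * P * B).det) :
    let W := R + Bᵀ * P * B
    let L := W⁻¹ * (Bᵀ * P * A)
    Q + (A + B * K)ᵀ * P * (A + B * K) + Kᵀ * R * K =
      (Q + Aᵀ * P * A - Aᵀ * P * B * W⁻¹ * (Bᵀ * P * A)) + (K + L)ᵀ * W * (K + L) := by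
  intro W L
  have hWL : W * L = Bᵀ * P * A := by
    rw [← Matrix.mul_assoc, mul_nonsing_inv _ hW, Matrix.one_mul]
  have hWt : Wᵀ = W := by simp [W, transpose_mul, hP, hR, Matrix.mul_assoc]
  have hLW : Lᵀ * W = Aᵀ * P * B := by
    rw [← hWt, ← transpose_mul, hWL]; simp [transpose_mul, hP, Matrix.mul_assoc]
  have hRic : Aᵀ * P * B * W⁻¹ * (Bᵀ * P * A) = Lᵀ * W * L := by
    rw [hLW, Matrix.mul_assoc (Aᵀ * P * B)]
  rw [hRic]
  calc Q + (A + B * K)ᵀ * P * (A + B * K) + Kᵀ * R * K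
      = Q + Aᵀ * P * A + Kᵀ * (Bᵀ * P * A) + Aᵀ * P * B * K + Kᵀ * W * K := by
        simp only [W, transpose_add, transpose_mul, Matrix.add_mul, Matrix.mul_add,
          Matrix.mul_assoc]; abel
    _ = _ := by
        rw [← hWL, ← hLW]
        simp only [transpose_add, Matrix.add_mul, Matrix.mul_add, Matrix.mul_assoc]; abel

end RealMatrix

namespace SwitchedLQR

variable {n m M : ℕ} (S : SwitchedLQR n m M) (i : Fin M)

def closedLoopCost (P : Matrix (Fin n) (Fin n) ℝ) (K : Matrix (Fin m) (Fin n) ℝ) :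
    Matrix (Fin n) (Fin n) ℝ :=
  S.Q i + (S.A i + S.B i * K)ᵀ * P * (S.A i + S.B i * K) + Kᵀ * S.R i * K

variable {S i}

theorem closedLoopCost_mono {P₁ P₂ : Matrix (Fin n) (Fin n) ℝ} (h : P₁ ≤ P₂)
    (K : Matrix (Fin m) (Fin n) ℝ) : S.closedLoopCost i P₁ K ≤ S.closedLoopCost i P₂ K := by
  unfold closedLoopCost
  gcongr
  exact transpose_mul_mul_le_transpose_mul_mul h _

theorem posDef_R_add_transpose_mul_mul (hR : (S.R i).PosDef) {P : Matrix (Fin n) (Fin n) ℝ}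
    (hP : P.PosSemidef) : (S.R i + (S.B i)ᵀ * P * S.B i).PosDef :=
  hR.add_posSemidef (hP.transpose_mul_mul_same _)

theorem ric_le_closedLoopCost (hR : (S.R i).PosDef) {P : Matrix (Fin n) (Fin n) ℝ}
    (hP : P.PosSemidef) (K : Matrix (Fin m) (Fin n) ℝ) :
    S.Ric i P ≤ S.closedLoopCost i P K := by
  have hW := posDef_R_add_transpose_mul_mul hR hP
  rw [closedLoopCost, closedLoop_eq_riccati_add _ _ _ _ _ _ hP.transpose_eq
    hR.posSemidef.transpose_eq hW.det_pos.ne'.isUnit]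
  exact le_add_of_nonneg_right (hW.posSemidef.transpose_mul_mul_same _).nonneg

theorem exists_ric_eq_closedLoopCost (hR : (S.R i).PosDef) {P : Matrix (Fin n) (Fin n) ℝ}
    (hP : P.PosSemidef) : ∃ K, S.Ric i P = S.closedLoopCost i P K := by
  have hW := posDef_R_add_transpose_mul_mul hR hP
  refine ⟨-((S.R i + (S.B i)ᵀ * P * S.B i)⁻¹ * ((S.B i)ᵀ * P * S.A i)), ?_⟩
  rw [closedLoopCost, closedLoop_eq_riccati_add _ _ _ _ _ _ hP.transpose_eq
    hR.posSemidef.transpose_eq hW.det_pos.ne'.isUnit]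
  simp [Ric, Matrix.mul_assoc]

theorem ric_mono (hR : (S.R i).PosDef) {P₁ P₂ : Matrix (Fin n) (Fin n) ℝ}
    (hP₁ : P₁.PosSemidef) (h : P₁ ≤ P₂) : S.Ric i P₁ ≤ S.Ric i P₂ := by
  obtain ⟨K, hK⟩ := exists_ric_eq_closedLoopCost hR (hP₁.nonneg.trans h).posSemidef
  calc S.Ric i P₁ ≤ S.closedLoopCost i P₁ K := ric_le_closedLoopCost hR hP₁ K
    _ ≤ S.closedLoopCost i P₂ K := closedLoopCost_mono h K
    _ = S.Ric i P₂ := hK.symm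

theorem le_ric_of_cond1 (hR : (S.R i).PosDef) {Pund : Matrix (Fin n) (Fin n) ℝ}
    (hPund : Pund.PosSemidef) (hC : S.Cond1 Pund) : Pund ≤ S.Ric i Pund := by
  have hW := posDef_R_add_transpose_mul_mul hR hPund
  have := hW.isUnit.invertible
  have hBA : ((S.A i)ᵀ * Pund * S.B i)ᴴ = (S.B i)ᵀ * Pund * S.A i := by
    simp [conjTranspose_eq_transpose_of_trivial, transpose_mul, hPund.transpose_eq,
      Matrix.mul_assoc]
  have hSchur := (PosDef.fromBlocks₂₂ _ _ hW).mp (hBA ▸ hC i)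
  rw [hBA] at hSchur
  have hRic : S.Ric i Pund - Pund = (S.A i)ᵀ * Pund * S.A i - Pund + S.Q i -
      (S.A i)ᵀ * Pund * S.B i * (S.R i + (S.B i)ᵀ * Pund * S.B i)⁻¹ *
        ((S.B i)ᵀ * Pund * S.A i) := by
    rw [Ric]; abel
  rw [le_iff, hRic]
  exact hSchur

variable (hR : ∀ i, (S.R i).PosDef) {Pund : Matrix (Fin n) (Fin n) ℝ} (hPund : Pund.PosSemidef)
  (hC : S.Cond1 Pund)
include hR hPund hC

theorem le_pseq (l : List (Fin M)) : Pund ≤ S.Pseq Pund l := by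
  induction l with
  | nil => exact le_rfl
  | cons i l ih => exact (le_ric_of_cond1 (hR i) hPund hC).trans (ric_mono (hR i) hPund ih)

theorem pseq_le_pseq_append (t r : List (Fin M)) : S.Pseq Pund t ≤ S.Pseq Pund (t ++ r) := by
  induction t with
  | nil => exact le_pseq hR hPund hC r
  | cons i t ih =>
    exact ric_mono (hR i) (hPund.nonneg.trans (le_pseq hR hPund hC t)).posSemidef ih

theorem pseq_le_of_isPrefix {t l : List (Fin M)} (h : t <+: l) :
    S.Pseq Pund t ≤ S.Pseq Pund l := by
  obtain ⟨r, rfl⟩ := h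
  exact pseq_le_pseq_append hR hPund hC t r

end SwitchedLQR

theorem stmt18_general {n m M : ℕ}
    (S : SwitchedLQR n m M)
    (hR : ∀ i : Fin M, (S.R i).PosDef)
    (Pund : Matrix (Fin n) (Fin n) ℝ) (hPund : Pund.PosSemidef)
    (hC : S.Cond1 Pund)
    (d : ℕ) (x : Fin n → ℝ) (T : Finset (List (Fin M)))
    (hcover : ∀ l : List (Fin M), l.length = d → ∃ t ∈ T, t <+: l)
    (s : List (Fin M)) (hs : s.length = d)
    (hmin : ∀ t ∈ T, x ⬝ᵥ ((S.Pseq Pund s) *ᵥ x) ≤ x ⬝ᵥ ((S.Pseq Pund t) *ᵥ x)) :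
    x ⬝ᵥ ((S.Pseq Pund s) *ᵥ x) = S.Vd Pund d x ∧
    ∀ l : List (Fin M), l.length = d →
      x ⬝ᵥ ((S.Pseq Pund s) *ᵥ x) ≤ x ⬝ᵥ ((S.Pseq Pund l) *ᵥ x) := by
  have hle : ∀ l : List (Fin M), l.length = d →
      x ⬝ᵥ ((S.Pseq Pund s) *ᵥ x) ≤ x ⬝ᵥ ((S.Pseq Pund l) *ᵥ x) := by
    intro l hl
    obtain ⟨t, htT, hprefix⟩ := hcover l hl
    exact (hmin t htT).trans
      (dotProduct_mulVec_le_of_le (S.pseq_le_of_isPrefix hR hPund hC hprefix) x)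
  have hleast : IsLeast {r : ℝ | ∃ l : List (Fin M), l.length = d ∧
      r = x ⬝ᵥ ((S.Pseq Pund l) *ᵥ x)} (x ⬝ᵥ ((S.Pseq Pund s) *ᵥ x)) := by
    refine ⟨⟨s, hs, rfl⟩, ?_⟩
    rintro _ ⟨l, hl, rfl⟩
    exact hle l hl
  exact ⟨hleast.csInf_eq.symm, hle⟩

/-- correctness certificate for best-first exploration, core of
Proposition 4: under Condition 1, if `T` is a finite set of mode sequences such
that every length-`d` sequence has a prefix in `T`, and `s ∈ T` has length `d`
and minimizes `xᵀP_tx` over `t ∈ T`, then `xᵀP_sx = V*_d(x)`, i.e. `s` attains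
the minimum of `xᵀP_𝐢x` over all length-`d` sequences. -/
theorem stmt18 {n m M : ℕ} (hn : 0 < n) (hm : 0 < m) (hM : 0 < M)
    (S : SwitchedLQR n m M)
    (hQ : ∀ i : Fin M, (S.Q i).PosDef) (hR : ∀ i : Fin M, (S.R i).PosDef)
    (Pund : Matrix (Fin n) (Fin n) ℝ) (hPund : Pund.PosSemidef)
    (hC : S.Cond1 Pund)
    (d : ℕ) (x : Fin n → ℝ) (T : Finset (List (Fin M)))
    (hcover : ∀ l : List (Fin M), l.length = d → ∃ t ∈ T, t <+: l)
    (s : List (Fin M)) (hsT : s ∈ T) (hs : s.length = d)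
    (hmin : ∀ t ∈ T, x ⬝ᵥ ((S.Pseq Pund s) *ᵥ x) ≤ x ⬝ᵥ ((S.Pseq Pund t) *ᵥ x)) :
    x ⬝ᵥ ((S.Pseq Pund s) *ᵥ x) = S.Vd Pund d x ∧
    ∀ l : List (Fin M), l.length = d →
      x ⬝ᵥ ((S.Pseq Pund s) *ᵥ x) ≤ x ⬝ᵥ ((S.Pseq Pund l) *ᵥ x) :=
  stmt18_general S hR Pund hPund hC d x T hcover s hs hmin
end
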